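/- Let N be a positive integer and σ a permutation of the positive integers with |σ(n) - n| ≤ N for every n, and define l'_n := l_{σ(n)}. Let Γ^0_{nm}(h) and K⁰ be built from {l_n} and (Γ^0)'_{nm}(h) and (K⁰)' be built (by the same formulas) from {l'_n}. If K⁰ := sup_{n ≥ 1} sup_{h ∈ [0, l_n]} inf_{m ≥ 1} Γ^0_{nm}(h) is finite, then (K⁰)' ≤ 4N + 1 + K⁰. -/
import Mathlib


/-- The function `Γ⁰_{nm}(h)` associated to the sequence `{l_n}`. -/
noncomputable def Gamma0F (l : ℕ → ℝ) (n m : ℕ) (h : ℝ) : ℝ :=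
  if m < n then
    (if l m ≤ h then
      Real.exp h * ∑ k ∈ Finset.Icc (m + 1) n, Real.exp (-l k)
    else
      l m - h + Real.exp h * ∑ k ∈ Finset.Icc m n, Real.exp (-l k))
  else if m = n then min h (l n - h)
  else
    (if l m ≤ h then
      Real.exp h * ∑ k ∈ Finset.Icc n (m - 1), Real.exp (-l k)
    else
      l m - h + Real.exp h * ∑ k ∈ Finset.Icc n m, Real.exp (-l k))

/-- `A_n(h)`: the largest positive integer `m < n` with `l_m ≤ h`, or `1` if there is none. -/
noncomputable def AFun (l : ℕ → ℝ) (n : ℕ) (h : ℝ) : ℕ :=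
  sSup ({1} ∪ {m : ℕ | 1 ≤ m ∧ m < n ∧ l m ≤ h})

/-- `B_n(h)`: the smallest integer `m > n` with `l_m ≤ h`, or `∞` if there is none. -/
noncomputable def BFun (l : ℕ → ℝ) (n : ℕ) (h : ℝ) : ℕ∞ :=
  sInf {x : ℕ∞ | ∃ m : ℕ, x = (m : ℕ∞) ∧ n < m ∧ l m ≤ h}

/-- `inf_{m ≥ 1} Γ⁰_{nm}(h)`. -/
noncomputable def infGamma0F (l : ℕ → ℝ) (n : ℕ) (h : ℝ) : ℝ :=
  sInf {x : ℝ | ∃ m : ℕ, 1 ≤ m ∧ x = Gamma0F l n m h}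

/-- The set whose supremum is `K⁰ = sup_{n ≥ 1} sup_{h ∈ [0, l_n]} inf_{m ≥ 1} Γ⁰_{nm}(h)`. -/
def K0SetF (l : ℕ → ℝ) : Set ℝ :=
  {x : ℝ | ∃ n : ℕ, 1 ≤ n ∧ ∃ h : ℝ, 0 ≤ h ∧ h ≤ l n ∧ x = infGamma0F l n h}

lemma gamma_nonneg (l : ℕ → ℝ) (n m : ℕ) (h : ℝ) (h0 : 0 ≤ h) (hn : h ≤ l n) :
    0 ≤ Gamma0F l n m h := by
  unfold Gamma0F
  split_ifs with h1 h2 h3 h4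
  · positivity
  · have : (0:ℝ) ≤ Real.exp h * ∑ k ∈ Finset.Icc m n, Real.exp (-l k) := by positivity
    push_neg at h2; linarith
  · exact le_min h0 (by linarith)
  · positivity
  · have : (0:ℝ) ≤ Real.exp h * ∑ k ∈ Finset.Icc n m, Real.exp (-l k) := by positivity
    push_neg at h4; linarith

lemma master (l : ℕ → ℝ) (σ : Equiv.Perm ℕ) (N : ℕ) (h : ℝ) (p q u v : ℕ)
    (bnd : ∀ k : ℕ, |(σ k : ℤ) - (k : ℤ)| ≤ (N : ℤ))
    (hpu : (u : ℤ) ≤ (p : ℤ) + N) (hqv : (q : ℤ) ≤ (v : ℤ) + N)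
    (hout : ∀ k : ℕ, p ≤ k → k ≤ q → ¬(u ≤ σ k ∧ σ k ≤ v) → h ≤ l (σ k)) :
    Real.exp h * ∑ k ∈ Finset.Icc p q, Real.exp (-l (σ k)) ≤
      Real.exp h * ∑ j ∈ Finset.Icc u v, Real.exp (-l j) + 4 * N := by
  classical
  set s := Finset.Icc p q with hs
  set P : ℕ → Prop := fun k => u ≤ σ k ∧ σ k ≤ v with hP
  have hsplit := Finset.sum_filter_add_sum_filter_not s P (fun k => Real.exp (-l (σ k)))
  have hin : ∑ k ∈ s.filter P, Real.exp (-l (σ k)) ≤ ∑ j ∈ Finset.Icc u v, Real.exp (-l j) := by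
    rw [← Finset.sum_image (g := σ) (f := fun j => Real.exp (-l j))
      (fun x _ y _ hxy => σ.injective hxy)]
    apply Finset.sum_le_sum_of_subset_of_nonneg
    · intro j hj
      obtain ⟨k, hk, rfl⟩ := Finset.mem_image.mp hj
      have := Finset.mem_filter.mp hk
      exact Finset.mem_Icc.mpr this.2
    · intro i _ _; positivity
  have hcard : ((s.filter fun k => ¬ P k).card : ℝ) ≤ 4 * N := by
    have hsub : (s.filter fun k => ¬ P k) ⊆
        (s.filter fun k => σ k < u) ∪ (s.filter fun k => v < σ k) := by
      intro k hk
      obtain ⟨hks, hkP⟩ := Finset.mem_filter.mp hk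
      simp only [hP, not_and_or, not_le] at hkP
      rcases hkP with h' | h'
      · exact Finset.mem_union_left _ (Finset.mem_filter.mpr ⟨hks, h'⟩)
      · exact Finset.mem_union_right _ (Finset.mem_filter.mpr ⟨hks, h'⟩)
    have c1 : (s.filter fun k => σ k < u).card ≤ 2 * N := by
      have hm : ∀ a ∈ (s.filter fun k => σ k < u), ((σ a : ℤ)) ∈
          Finset.Icc ((p : ℤ) - N) ((u : ℤ) - 1) := by
        intro a ha
        obtain ⟨has, hau⟩ := Finset.mem_filter.mp ha
        have hap := (Finset.mem_Icc.mp (hs ▸ has)).1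
        have := abs_le.mp (bnd a)
        rw [Finset.mem_Icc]
        omega
      have := Finset.card_le_card_of_injOn (fun a => ((σ a : ℤ))) hm
        (fun a _ b _ hab => σ.injective (Nat.cast_injective hab))
      rw [Int.card_Icc] at this
      omega
    have c2 : (s.filter fun k => v < σ k).card ≤ 2 * N := by
      have hm : ∀ a ∈ (s.filter fun k => v < σ k), ((σ a : ℤ)) ∈
          Finset.Icc ((v : ℤ) + 1) ((q : ℤ) + N) := by
        intro a ha
        obtain ⟨has, hau⟩ := Finset.mem_filter.mp ha
        have haq := (Finset.mem_Icc.mp (hs ▸ has)).2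
        have := abs_le.mp (bnd a)
        rw [Finset.mem_Icc]
        omega
      have := Finset.card_le_card_of_injOn (fun a => ((σ a : ℤ))) hm
        (fun a _ b _ hab => σ.injective (Nat.cast_injective hab))
      rw [Int.card_Icc] at this
      omega
    have hle := (Finset.card_le_card hsub).trans (Finset.card_union_le _ _)
    calc ((s.filter fun k => ¬ P k).card : ℝ) ≤ ((4 * N : ℕ) : ℝ) := by
          exact_mod_cast (hle.trans (by omega))
      _ = 4 * N := by push_cast; ring
  have hout' : Real.exp h * ∑ k ∈ s.filter (fun k => ¬ P k), Real.exp (-l (σ k)) ≤ 4 * N := by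
    rw [Finset.mul_sum]
    calc ∑ k ∈ s.filter (fun k => ¬ P k), Real.exp h * Real.exp (-l (σ k))
        ≤ ∑ k ∈ s.filter (fun k => ¬ P k), 1 := by
          apply Finset.sum_le_sum
          intro k hk
          obtain ⟨hks, hkP⟩ := Finset.mem_filter.mp hk
          have hkpq := Finset.mem_Icc.mp (hs ▸ hks)
          have hlk := hout k hkpq.1 hkpq.2 hkP
          rw [← Real.exp_add, Real.exp_le_one_iff]
          linarith
      _ = ((s.filter fun k => ¬ P k).card : ℝ) := by simp
      _ ≤ 4 * N := hcard
  have hin' : Real.exp h * ∑ k ∈ s.filter P, Real.exp (-l (σ k)) ≤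
      Real.exp h * ∑ j ∈ Finset.Icc u v, Real.exp (-l j) :=
    mul_le_mul_of_nonneg_left hin (Real.exp_nonneg h)
  calc Real.exp h * ∑ k ∈ s, Real.exp (-l (σ k))
      = Real.exp h * ∑ k ∈ s.filter P, Real.exp (-l (σ k)) +
        Real.exp h * ∑ k ∈ s.filter (fun k => ¬ P k), Real.exp (-l (σ k)) := by
        rw [← mul_add, hsplit]
    _ ≤ _ := by linarith

lemma choose_prime (f : ℕ → ℝ) (n j : ℕ) (h : ℝ) (hn : 1 ≤ n) (hj : 1 ≤ j) (hjn : j ≠ n)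
    (hln : h ≤ f n) :
    ∃ (mm p q : ℕ) (c : ℝ), 1 ≤ mm ∧
      Gamma0F f n mm h = c + Real.exp h * ∑ k ∈ Finset.Icc p q, Real.exp (-f k) ∧
      (∀ k, p ≤ k → k ≤ q → h ≤ f k) ∧
      min n j ≤ p ∧ q ≤ max n j ∧
      ((c = 0 ∧ (n < j → q + 1 ≤ j) ∧ (j < n → j + 1 ≤ p)) ∨ (c = f j - h ∧ h < f j)) := by
  classical
  rcases lt_or_gt_of_ne hjn with hlt | hgt
  · -- j < n : pick the largest good index a with j ≤ a < n
    set P : ℕ → Prop := fun k => j ≤ k ∧ (f k ≤ h ∨ k = j) with hP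
    have hPj : P j := ⟨le_refl j, Or.inr rfl⟩
    have hjn1 : j ≤ n - 1 := by omega
    have haj : j ≤ Nat.findGreatest P (n - 1) := Nat.le_findGreatest hjn1 hPj
    have haspec : P (Nat.findGreatest P (n - 1)) := Nat.findGreatest_spec hjn1 hPj
    have han : Nat.findGreatest P (n - 1) ≤ n - 1 := Nat.findGreatest_le (n - 1)
    set a := Nat.findGreatest P (n - 1) with ha
    have hinterior : ∀ k, a < k → k < n → h < f k := by
      intro k hak hkn
      have hnk := Nat.findGreatest_is_greatest (ha ▸ hak) (by omega)
      simp only [hP, not_and_or, not_or, not_le] at hnk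
      rcases hnk with h' | h'
      · omega
      · exact h'.1
    by_cases hfa : f a ≤ h
    · refine ⟨a, a + 1, n, 0, by omega, ?_, ?_, by omega, by omega,
        Or.inl ⟨rfl, by omega, by omega⟩⟩
      · rw [Gamma0F, if_pos (by omega : a < n), if_pos hfa]; ring
      · intro k hk1 hk2
        rcases eq_or_lt_of_le hk2 with rfl | hk2'
        · exact hln
        · exact le_of_lt (hinterior k (by omega) hk2')
    · have haj' : a = j := by
        rcases haspec.2 with h' | h'
        · exact absurd h' hfa
        · exact h'
      rw [haj'] at hfa
      have hfj : h < f j := lt_of_not_ge hfa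
      refine ⟨j, j, n, f j - h, hj, ?_, ?_, by omega, by omega, Or.inr ⟨rfl, hfj⟩⟩
      · rw [Gamma0F, if_pos (by omega : j < n), if_neg hfa]
      · intro k hk1 hk2
        rcases eq_or_lt_of_le hk1 with rfl | hk1'
        · exact le_of_lt hfj
        · rcases eq_or_lt_of_le hk2 with rfl | hk2'
          · exact hln
          · exact le_of_lt (hinterior k (by omega) hk2')
  · -- n < j : pick the smallest good index m with n < m ≤ j
    set P : ℕ → Prop := fun k => n < k ∧ k ≤ j ∧ (f k ≤ h ∨ k = j) with hP
    have hPj : P j := ⟨hgt, le_refl j, Or.inr rfl⟩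
    have hex : ∃ k, P k := ⟨j, hPj⟩
    have hmspec : P (Nat.find hex) := Nat.find_spec hex
    set m := Nat.find hex with hm
    have hnm : n < m := hmspec.1
    have hmj : m ≤ j := hmspec.2.1
    have hinterior : ∀ k, n < k → k < m → h < f k := by
      intro k hnk hkm
      have hnotP := Nat.find_min hex (hm ▸ hkm)
      simp only [hP, not_and_or, not_or, not_le] at hnotP
      rcases hnotP with h' | h' | h'
      · omega
      · omega
      · exact h'.1
    by_cases hfm : f m ≤ h
    · refine ⟨m, n, m - 1, 0, by omega, ?_, ?_, by omega, by omega,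
        Or.inl ⟨rfl, by omega, by omega⟩⟩
      · rw [Gamma0F, if_neg (by omega : ¬ m < n), if_neg (by omega : ¬ m = n), if_pos hfm]
        ring
      · intro k hk1 hk2
        rcases eq_or_lt_of_le hk1 with rfl | hk1'
        · exact hln
        · exact le_of_lt (hinterior k hk1' (by omega))
    · have hmj' : m = j := by
        rcases hmspec.2.2 with h' | h'
        · exact absurd h' hfm
        · exact h'
      rw [hmj'] at hfm
      have hfj : h < f j := lt_of_not_ge hfm
      refine ⟨j, n, j, f j - h, hj, ?_, ?_, by omega, by omega, Or.inr ⟨rfl, hfj⟩⟩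
      · rw [Gamma0F, if_neg (by omega : ¬ j < n), if_neg (by omega : ¬ j = n), if_neg hfm]
      · intro k hk1 hk2
        rcases eq_or_lt_of_le hk1 with rfl | hk1'
        · exact hln
        · rcases eq_or_lt_of_le hk2 with rfl | hk2'
          · exact le_of_lt hfj
          · exact le_of_lt (hinterior k hk1' (by omega))

lemma gamma_diag (f : ℕ → ℝ) (n : ℕ) (h : ℝ) : Gamma0F f n n h = min h (f n - h) := by
  rw [Gamma0F, if_neg (lt_irrefl n), if_pos rfl]


/-- Let `N` be a positive integer and `σ` a permutation of the positive integers (encoded as a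
permutation of `ℕ` fixing `0`) with `|σ(n) - n| ≤ N` for every `n`, and define
`l'_n := l_{σ(n)}`. If `K⁰ = sup_{n ≥ 1} sup_{h ∈ [0, l_n]} inf_{m ≥ 1} Γ⁰_{nm}(h)` is
finite, then `(K⁰)' ≤ 4N + 1 + K⁰`, where `(K⁰)'` is built by the same formulas from `{l'_n}`
(the bound on `(K⁰)'` is expressed by bounding each `inf_{m ≥ 1} (Γ⁰)'_{nm}(h)` for `n ≥ 1`,
`h ∈ [0, l'_n]`). -/
theorem stmt19 (l : ℕ → ℝ) (hl : ∀ n : ℕ, 1 ≤ n → 0 < l n)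
    (N : ℕ) (hN : 1 ≤ N) (σ : Equiv.Perm ℕ) (hσ0 : σ 0 = 0)
    (hσ : ∀ n : ℕ, 1 ≤ n → |(σ n : ℤ) - (n : ℤ)| ≤ (N : ℤ))
    (hbdd : BddAbove (K0SetF l)) :
    ∀ n : ℕ, 1 ≤ n → ∀ h : ℝ, 0 ≤ h → h ≤ l (σ n) →
      infGamma0F (fun k => l (σ k)) n h ≤ 4 * (N : ℝ) + 1 + sSup (K0SetF l) := by
  intro n hn h h0 hhl
  classical
  set K := sSup (K0SetF l) with hK
  have hσpos : ∀ k : ℕ, 1 ≤ k → 1 ≤ σ k := by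
    intro k hk
    by_contra hcon
    push_neg at hcon
    have h1 : σ k = 0 := by omega
    have : k = 0 := σ.injective (by rw [h1, hσ0])
    omega
  have bnd : ∀ k : ℕ, |(σ k : ℤ) - (k : ℤ)| ≤ (N : ℤ) := by
    intro k
    rcases Nat.eq_zero_or_pos k with rfl | hk
    · rw [hσ0]; simpa using (by positivity : (0:ℤ) ≤ (N:ℤ))
    · exact hσ k hk
  have hn'1 : 1 ≤ σ n := hσpos n hn
  -- the original infimum is at most K
  have hmemK : infGamma0F l (σ n) h ∈ K0SetF l := ⟨σ n, hn'1, h, h0, hhl, rfl⟩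
  have h1 : infGamma0F l (σ n) h ≤ K := le_csSup hbdd hmemK
  have hSne : {x : ℝ | ∃ m : ℕ, 1 ≤ m ∧ x = Gamma0F l (σ n) m h}.Nonempty :=
    ⟨Gamma0F l (σ n) (σ n) h, σ n, hn'1, rfl⟩
  have h2 : sInf {x : ℝ | ∃ m : ℕ, 1 ≤ m ∧ x = Gamma0F l (σ n) m h} < K + 1 := by
    unfold infGamma0F at h1; linarith
  obtain ⟨x, ⟨m', hm'1, rfl⟩, hxlt⟩ := exists_lt_of_csInf_lt hSne h2
  -- the permuted index corresponding to m'
  set j := σ.symm m' with hj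
  have hσj : σ j = m' := σ.apply_symm_apply m'
  have hj1 : 1 ≤ j := by
    by_contra hcon
    push_neg at hcon
    have hj0 : j = 0 := by omega
    have : m' = 0 := by rw [← hσj, hj0, hσ0]
    omega
  have hN0 : (0:ℝ) ≤ 4 * (N:ℝ) := by positivity
  -- reduce to finding a single good index mm
  have hbb : BddBelow {x : ℝ | ∃ m : ℕ, 1 ≤ m ∧ x = Gamma0F (fun k => l (σ k)) n m h} := by
    refine ⟨0, fun x hx => ?_⟩
    obtain ⟨m, _, rfl⟩ := hx
    exact gamma_nonneg (fun k => l (σ k)) n m h h0 hhl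
  suffices hfind : ∃ mm : ℕ, 1 ≤ mm ∧
      Gamma0F (fun k => l (σ k)) n mm h ≤ 4 * (N : ℝ) + 1 + K by
    obtain ⟨mm, hmm1, hmmle⟩ := hfind
    exact le_trans (csInf_le hbb ⟨mm, hmm1, rfl⟩) hmmle
  by_cases hjn : j = n
  · -- the trivial diagonal case
    refine ⟨n, hn, ?_⟩
    have hm'eq : m' = σ n := by rw [← hσj, hjn]
    have : Gamma0F (fun k => l (σ k)) n n h = Gamma0F l (σ n) m' h := by
      rw [hm'eq, gamma_diag, gamma_diag]
    rw [this]
    linarith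
  · -- main case
    obtain ⟨mm, p, q, c, hmm1, hΓ', hout, hpmin, hqmax, hcase⟩ :=
      choose_prime (fun k => l (σ k)) n j h hn hj1 hjn hhl
    -- decompose the original Γ-value
    obtain ⟨u, v, c', hc'0, horig, hmatch, hiu⟩ : ∃ (u v : ℕ) (c' : ℝ), 0 ≤ c' ∧
        c' + Real.exp h * ∑ k ∈ Finset.Icc u v, Real.exp (-l k) ≤ Gamma0F l (σ n) m' h ∧
        (h < l m' → c' = l m' - h) ∧
        ((u = σ n ∧ v + 1 = m' ∧ σ n < m' ∧ l m' ≤ h) ∨ (u = σ n ∧ v = m' ∧ σ n < m') ∨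
         (u = m' + 1 ∧ v = σ n ∧ m' < σ n ∧ l m' ≤ h) ∨ (u = m' ∧ v = σ n ∧ m' < σ n)) := by
      have hm'n' : m' ≠ σ n := by
        intro he
        exact hjn (σ.injective (by rw [hσj, he]))
      rcases lt_or_gt_of_ne hm'n' with hlt | hgt
      · by_cases hlm : l m' ≤ h
        · refine ⟨m' + 1, σ n, 0, le_refl 0, ?_,
            fun hc => absurd hc (not_lt.mpr hlm), Or.inr (Or.inr (Or.inl ⟨rfl, rfl, hlt, hlm⟩))⟩
          rw [Gamma0F, if_pos hlt, if_pos hlm, zero_add]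
        · refine ⟨m', σ n, l m' - h, by linarith [lt_of_not_ge hlm], ?_,
            fun _ => rfl, Or.inr (Or.inr (Or.inr ⟨rfl, rfl, hlt⟩))⟩
          rw [Gamma0F, if_pos hlt, if_neg hlm]
      · by_cases hlm : l m' ≤ h
        · refine ⟨σ n, m' - 1, 0, le_refl 0, ?_,
            fun hc => absurd hc (not_lt.mpr hlm), Or.inl ⟨rfl, by omega, hgt, hlm⟩⟩
          rw [Gamma0F, if_neg (by omega : ¬ m' < σ n), if_neg (by omega : ¬ m' = σ n),
            if_pos hlm, zero_add]
        · refine ⟨σ n, m', l m' - h, by linarith [lt_of_not_ge hlm], ?_,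
            fun _ => rfl, Or.inr (Or.inl ⟨rfl, rfl, hgt⟩)⟩
          rw [Gamma0F, if_neg (by omega : ¬ m' < σ n), if_neg (by omega : ¬ m' = σ n),
            if_neg hlm]
    have habsn := abs_le.mp (bnd n)
    have habsj := abs_le.mp (bnd j)
    rw [hσj] at habsj
    have mainstep : c ≤ c' → (u:ℤ) ≤ (p:ℤ) + N → (q:ℤ) ≤ (v:ℤ) + N →
        ∃ mm : ℕ, 1 ≤ mm ∧ Gamma0F (fun k => l (σ k)) n mm h ≤ 4 * (N : ℝ) + 1 + K := by
      intro hcc' hpu hqv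
      have hsum := master l σ N h p q u v bnd hpu hqv (fun k hk1 hk2 _ => hout k hk1 hk2)
      refine ⟨mm, hmm1, ?_⟩
      rw [hΓ']
      linarith
    rcases hcase with ⟨hc0, hs1, hs2⟩ | ⟨hceq, hfj⟩
    · -- c = 0
      have hcc' : c ≤ c' := by rw [hc0]; exact hc'0
      rcases hiu with ⟨h1', h2', h3', _⟩ | ⟨h1', h2', h3'⟩ | ⟨h1', h2', h3', _⟩ | ⟨h1', h2', h3'⟩ <;>
        exact mainstep hcc' (by omega) (by omega)
    · -- c = l'_j - h and h < l'_j = l m'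
      have hfj' : h < l m' := by rw [← hσj]; exact hfj
      have hcc' : c ≤ c' := by rw [hceq, hmatch hfj', ← hσj]
      rcases hiu with ⟨h1', h2', h3', hlm⟩ | ⟨h1', h2', h3'⟩ | ⟨h1', h2', h3', hlm⟩ | ⟨h1', h2', h3'⟩
      · exact absurd hfj' (not_lt.mpr hlm)
      · exact mainstep hcc' (by omega) (by omega)
      · exact absurd hfj' (not_lt.mpr hlm)
      · exact mainstep hcc' (by omega) (by omega)
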